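/- For a commutative monoid A with zero, a multiplicative subset S ⊆ A, and an A-set M, there is an isomorphism of A-sets S⁻¹M ≅ S⁻¹A ⊗_A M, given by m/s ↦ (1/s) ⊗ m with inverse (a/s) ⊗ m ↦ (a.m)/s. -/

import Mathlib

universe u

/-- An `A`-set over a commutative monoid with zero `A`: a pointed set with an `A`-action
such that `(ab).m = a.(b.m)`, `a.∗ = ∗`, `0.m = ∗` and `1.m = m`. -/
structure ASet (A : Type u) [CommMonoidWithZero A] : Type (u + 1) where
  carrier : Type u
  pt : carrier
  act : A → carrier → carrier
  act_mul : ∀ a b m, act (a * b) m = act a (act b m)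
  act_pt : ∀ a, act a pt = pt
  zero_act : ∀ m, act 0 m = pt
  one_act : ∀ m, act 1 m = m

variable {A : Type u} [CommMonoidWithZero A]

/-- A morphism of `A`-sets: a basepoint-preserving `A`-equivariant map. -/
structure ASetHom (M N : ASet A) where
  toFun : M.carrier → N.carrier
  map_pt : toFun M.pt = N.pt
  map_act : ∀ a m, toFun (M.act a m) = N.act a (toFun m)

namespace ASetHom

theorem ext {M N : ASet A} {f g : ASetHom M N} (h : ∀ m, f.toFun m = g.toFun m) :
    f = g := by
  cases f; cases g
  simp only [mk.injEq]
  exact funext h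

/-- The identity morphism of `A`-sets. -/
def id (M : ASet A) : ASetHom M M := ⟨fun m => m, rfl, fun _ _ => rfl⟩

/-- Composition of morphisms of `A`-sets. -/
def comp {M N P : ASet A} (g : ASetHom N P) (f : ASetHom M N) : ASetHom M P :=
  ⟨fun m => g.toFun (f.toFun m), by rw [f.map_pt, g.map_pt],
    fun a m => by rw [f.map_act, g.map_act]⟩

/-- Monomorphism in the category of `A`-sets. -/
def IsMono {M N : ASet A} (f : ASetHom M N) : Prop :=
  ∀ (P : ASet A) (g h : ASetHom P M), f.comp g = f.comp h → g = h

/-- Epimorphism in the category of `A`-sets. -/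
def IsEpi {M N : ASet A} (f : ASetHom M N) : Prop :=
  ∀ (P : ASet A) (g h : ASetHom N P), g.comp f = h.comp f → g = h

/-- Isomorphism in the category of `A`-sets. -/
def IsIso {M N : ASet A} (f : ASetHom M N) : Prop :=
  ∃ g : ASetHom N M, g.comp f = id M ∧ f.comp g = id N

/-- A morphism of `A`-sets is normal if each fibre over a non-basepoint element
contains at most one element. -/
def IsNormal {M N : ASet A} (f : ASetHom M N) : Prop :=
  ∀ m m', f.toFun m = f.toFun m' → f.toFun m ≠ N.pt → m = m'

/-- The kernel of a morphism of `A`-sets: the preimage of the basepoint. -/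
def kerSet {M N : ASet A} (f : ASetHom M N) : Set M.carrier :=
  {m | f.toFun m = N.pt}

end ASetHom

namespace ASet

/-- The sub-`A`-set determined by a subset stable under the action and containing the
basepoint. -/
def sub (M : ASet A) (S : Set M.carrier) (hpt : M.pt ∈ S)
    (hact : ∀ a : A, ∀ m ∈ S, M.act a m ∈ S) : ASet A where
  carrier := ↥S
  pt := ⟨M.pt, hpt⟩
  act a m := ⟨M.act a m.1, hact a m.1 m.2⟩
  act_mul a b m := Subtype.ext (M.act_mul a b m.1)
  act_pt a := Subtype.ext (M.act_pt a)
  zero_act m := Subtype.ext (M.zero_act m.1)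
  one_act m := Subtype.ext (M.one_act m.1)

/-- The relation collapsing the subset `S` to a point. -/
def quotRel (M : ASet A) (S : Set M.carrier) : M.carrier → M.carrier → Prop :=
  fun m m' => m = m' ∨ (m ∈ S ∧ m' ∈ S)

/-- The quotient `A`-set `M/S` collapsing an action-stable subset `S` to the basepoint. -/
def quot (M : ASet A) (S : Set M.carrier)
    (hact : ∀ a : A, ∀ m ∈ S, M.act a m ∈ S) : ASet A where
  carrier := Quot (M.quotRel S)
  pt := Quot.mk _ M.pt
  act a := Quot.lift (fun m => Quot.mk _ (M.act a m)) (by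
    rintro m m' (rfl | ⟨h1, h2⟩)
    · rfl
    · exact Quot.sound (Or.inr ⟨hact a m h1, hact a m' h2⟩))
  act_mul a b q := Quot.inductionOn q fun m => by
    show Quot.mk _ (M.act (a * b) m) = Quot.mk _ (M.act a (M.act b m))
    rw [M.act_mul]
  act_pt a := by
    show Quot.mk _ (M.act a M.pt) = Quot.mk _ M.pt
    rw [M.act_pt]
  zero_act q := Quot.inductionOn q fun m => by
    show Quot.mk _ (M.act 0 m) = Quot.mk _ M.pt
    rw [M.zero_act]
  one_act q := Quot.inductionOn q fun m => by
    show Quot.mk _ (M.act 1 m) = Quot.mk _ m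
    rw [M.one_act]

end ASet

namespace ASetHom

theorem kerSet_stable {M N : ASet A} (f : ASetHom M N) :
    ∀ a : A, ∀ m ∈ f.kerSet, M.act a m ∈ f.kerSet := by
  intro a m hm
  show f.toFun (M.act a m) = N.pt
  rw [f.map_act, hm, N.act_pt]

/-- The image of a morphism of `A`-sets, as an `A`-set. -/
def imageASet {M N : ASet A} (f : ASetHom M N) : ASet A :=
  N.sub (Set.range f.toFun) ⟨M.pt, f.map_pt⟩
    (fun a n hn => by
      obtain ⟨m, rfl⟩ := hn
      exact ⟨M.act a m, f.map_act a m⟩)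

/-- The coimage `M/ker f` of a morphism of `A`-sets. -/
def coimage {M N : ASet A} (f : ASetHom M N) : ASet A :=
  M.quot f.kerSet f.kerSet_stable

/-- The canonical morphism `M/ker f → im f`. -/
def canonical {M N : ASet A} (f : ASetHom M N) : ASetHom f.coimage f.imageASet where
  toFun := Quot.lift (fun m => (⟨f.toFun m, ⟨m, rfl⟩⟩ : ↥(Set.range f.toFun))) (by
    rintro m m' (rfl | ⟨h1, h2⟩)
    · rfl
    · exact Subtype.ext (h1.trans h2.symm))
  map_pt := Subtype.ext f.map_pt
  map_act a q := Quot.inductionOn q fun m => Subtype.ext (f.map_act a m)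

end ASetHom

namespace ASet

attribute [local instance] Classical.propDecidable

/-- `A` as an `A`-set over itself (basepoint `0`). -/
def ofSelf (A : Type u) [CommMonoidWithZero A] : ASet A :=
  ⟨A, 0, (· * ·), mul_assoc, mul_zero, zero_mul, one_mul⟩

/-- The `A`-set `eA` for an element `e` of `A`. -/
def idem (A : Type u) [CommMonoidWithZero A] (e : A) : ASet A :=
  (ofSelf A).sub {x | ∃ a : A, x = e * a} ⟨0, (mul_zero e).symm⟩
    (fun a m hm => by
      obtain ⟨b, rfl⟩ := hm
      exact ⟨a * b, mul_left_comm a e b⟩)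

/-- Underlying carrier of the wedge of a family of `A`-sets. -/
def WedgeCarrier {ι : Type u} (Ms : ι → ASet A) : Type u :=
  Option ((i : ι) × {m : (Ms i).carrier // m ≠ (Ms i).pt})

/-- Action on the wedge carrier. -/
noncomputable def wedgeAct {ι : Type u} (Ms : ι → ASet A) (a : A)
    (x : WedgeCarrier Ms) : WedgeCarrier Ms :=
  x.bind fun p =>
    if h : (Ms p.1).act a p.2.1 = (Ms p.1).pt then none else some ⟨p.1, ⟨_, h⟩⟩

theorem wedgeAct_mul {ι : Type u} (Ms : ι → ASet A) (a b : A) (x : WedgeCarrier Ms) :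
    wedgeAct Ms (a * b) x = wedgeAct Ms a (wedgeAct Ms b x) := by
  cases x with
  | none => rfl
  | some p =>
    obtain ⟨i, m, hm⟩ := p
    simp only [wedgeAct, Option.bind]
    by_cases h1 : (Ms i).act b m = (Ms i).pt
    · rw [dif_pos h1, dif_pos (by rw [(Ms i).act_mul, h1, (Ms i).act_pt])]
    · rw [dif_neg h1]
      simp only [Option.bind]
      by_cases h2 : (Ms i).act a ((Ms i).act b m) = (Ms i).pt
      · rw [dif_pos (by rw [(Ms i).act_mul]; exact h2), dif_pos h2]
      · rw [dif_neg (by rw [(Ms i).act_mul]; exact h2), dif_neg h2]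
        simp only [(Ms i).act_mul]
        rfl

/-- The wedge (coproduct) of a family of `A`-sets. -/
noncomputable def wedge {ι : Type u} (Ms : ι → ASet A) : ASet A where
  carrier := WedgeCarrier Ms
  pt := none
  act := wedgeAct Ms
  act_mul := wedgeAct_mul Ms
  act_pt _ := rfl
  zero_act x := by
    cases x with
    | none => rfl
    | some p =>
      simp only [wedgeAct, Option.bind]
      rw [dif_pos ((Ms p.1).zero_act p.2.1)]
  one_act x := by
    cases x with
    | none => rfl
    | some p =>
      obtain ⟨i, m, hm⟩ := p
      simp only [wedgeAct, Option.bind]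
      rw [dif_neg (by rw [(Ms i).one_act]; exact hm)]
      simp only [(Ms i).one_act]
      rfl

/-- `A`-sets `M` and `N` are isomorphic. -/
def Iso (M N : ASet A) : Prop := ∃ f : ASetHom M N, f.IsIso

/-- The free `A`-set on a (index) type `S`, i.e. `⋁_{s ∈ S} A·s`. -/
noncomputable def free (A : Type u) [CommMonoidWithZero A] (S : Type u) : ASet A :=
  wedge (fun _ : S => ofSelf A)

/-- A projective `A`-set: morphisms out of it lift along every epimorphism. -/
def IsProjective (P : ASet A) : Prop :=
  ∀ (M N : ASet A) (e : ASetHom M N), e.IsEpi →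
    ∀ f : ASetHom P N, ∃ g : ASetHom P M, e.comp g = f

end ASet

namespace ASet

attribute [local instance] Classical.propDecidable

/-- The binary wedge `M ∨ N` of two `A`-sets. -/
noncomputable def wedge2 (M N : ASet A) : ASet A where
  carrier := Option ({m : M.carrier // m ≠ M.pt} ⊕ {n : N.carrier // n ≠ N.pt})
  pt := none
  act a x := x.bind (Sum.elim
    (fun m => if h : M.act a m.1 = M.pt then none else some (.inl ⟨_, h⟩))
    (fun n => if h : N.act a n.1 = N.pt then none else some (.inr ⟨_, h⟩)))
  act_mul a b x := by
    cases x with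
    | none => rfl
    | some p =>
      cases p with
      | inl m =>
        simp only [Option.bind, Sum.elim_inl]
        by_cases h1 : M.act b m.1 = M.pt
        · rw [dif_pos h1, dif_pos (by rw [M.act_mul, h1, M.act_pt])]
        · rw [dif_neg h1]
          simp only [Option.bind, Sum.elim_inl]
          by_cases h2 : M.act a (M.act b m.1) = M.pt
          · rw [dif_pos (by rw [M.act_mul]; exact h2), dif_pos h2]
          · rw [dif_neg (by rw [M.act_mul]; exact h2), dif_neg h2]
            simp only [M.act_mul]
      | inr n =>
        simp only [Option.bind, Sum.elim_inr]
        by_cases h1 : N.act b n.1 = N.pt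
        · rw [dif_pos h1, dif_pos (by rw [N.act_mul, h1, N.act_pt])]
        · rw [dif_neg h1]
          simp only [Option.bind, Sum.elim_inr]
          by_cases h2 : N.act a (N.act b n.1) = N.pt
          · rw [dif_pos (by rw [N.act_mul]; exact h2), dif_pos h2]
          · rw [dif_neg (by rw [N.act_mul]; exact h2), dif_neg h2]
            simp only [N.act_mul]
  act_pt _ := rfl
  zero_act x := by
    cases x with
    | none => rfl
    | some p =>
      cases p with
      | inl m => simp only [Option.bind, Sum.elim_inl]; rw [dif_pos (M.zero_act m.1)]
      | inr n => simp only [Option.bind, Sum.elim_inr]; rw [dif_pos (N.zero_act n.1)]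
  one_act x := by
    cases x with
    | none => rfl
    | some p =>
      cases p with
      | inl m =>
        simp only [Option.bind, Sum.elim_inl]
        rw [dif_neg (by rw [M.one_act]; exact m.2)]
        simp only [M.one_act]
      | inr n =>
        simp only [Option.bind, Sum.elim_inr]
        rw [dif_neg (by rw [N.one_act]; exact n.2)]
        simp only [N.one_act]

/-- The canonical inclusion `M → M ∨ N`. -/
noncomputable def wedge2.inl (M N : ASet A) : ASetHom M (wedge2 M N) where
  toFun m := if h : m = M.pt then none else some (.inl ⟨m, h⟩)
  map_pt := dif_pos rfl
  map_act a m := by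
    try simp only []
    by_cases h : m = M.pt
    · subst h
      erw [dif_pos (M.act_pt a), dif_pos rfl]
      rfl
    · erw [dif_neg h]
      dsimp only [wedge2, Option.bind, Sum.elim_inl]

/-- The canonical projection `M ∨ N → N`. -/
noncomputable def wedge2.snd (M N : ASet A) : ASetHom (wedge2 M N) N where
  toFun x := x.elim N.pt (Sum.elim (fun _ => N.pt) (fun n => n.1))
  map_pt := rfl
  map_act a x := by
    try simp only []
    cases x with
    | none => exact (N.act_pt a).symm
    | some p =>
      cases p with
      | inl m =>
        dsimp only [wedge2, Option.bind, Sum.elim_inl]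
        by_cases h : M.act a m.1 = M.pt
        · rw [dif_pos h]
          exact (N.act_pt a).symm
        · rw [dif_neg h]
          exact (N.act_pt a).symm
      | inr n =>
        dsimp only [wedge2, Option.bind, Sum.elim_inr]
        by_cases h : N.act a n.1 = N.pt
        · rw [dif_pos h]
          exact h.symm
        · rw [dif_neg h]
          rfl

end ASet

namespace ASet

/-- The localization relation on `S × M`: `(s,m) ∼ (s',m')` iff `ts.m' = ts'.m` for
some `t ∈ S`. -/
def locRel (S : Submonoid A) (M : ASet A) :
    (S × M.carrier) → (S × M.carrier) → Prop :=
  fun p q => ∃ t : S, M.act (↑t * ↑p.1) q.2 = M.act (↑t * ↑q.1) p.2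

/-- The localization `S⁻¹M` of an `A`-set at a multiplicative subset `S`, with the
`A`-action `a.(m/s) = (a.m)/s`. -/
def loc (S : Submonoid A) (M : ASet A) : ASet A where
  carrier := Quot (locRel S M)
  pt := Quot.mk _ (1, M.pt)
  act a := Quot.lift (fun p => Quot.mk _ (p.1, M.act a p.2)) (by
    rintro ⟨s, m⟩ ⟨s', m'⟩ ⟨t, ht⟩
    dsimp only at ht
    refine Quot.sound ⟨t, ?_⟩
    dsimp only
    rw [← M.act_mul, mul_comm _ a, M.act_mul, ht, ← M.act_mul, mul_comm a, M.act_mul])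
  act_mul a b q := Quot.inductionOn q fun p => by
    show Quot.mk _ (p.1, M.act (a * b) p.2) = Quot.mk _ (p.1, M.act a (M.act b p.2))
    rw [M.act_mul]
  act_pt a := by
    show Quot.mk _ ((1 : S), M.act a M.pt) = Quot.mk _ ((1 : S), M.pt)
    rw [M.act_pt]
  zero_act q := Quot.inductionOn q fun p => by
    show Quot.mk _ (p.1, M.act 0 p.2) = Quot.mk _ ((1 : S), M.pt)
    rw [M.zero_act]
    exact Quot.sound ⟨1, by simp only [M.act_pt]⟩
  one_act q := Quot.inductionOn q fun p => by
    show Quot.mk _ (p.1, M.act 1 p.2) = Quot.mk _ p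
    rw [M.one_act]

end ASet

namespace ASetHom

/-- The localization `S⁻¹f` of a morphism of `A`-sets. -/
def locMap (S : Submonoid A) {M N : ASet A} (f : ASetHom M N) :
    ASetHom (ASet.loc S M) (ASet.loc S N) where
  toFun := Quot.lift (fun p => Quot.mk _ (p.1, f.toFun p.2)) (by
    rintro ⟨s, m⟩ ⟨s', m'⟩ ⟨t, ht⟩
    dsimp only at ht
    refine Quot.sound ⟨t, ?_⟩
    dsimp only
    rw [← f.map_act, ← f.map_act, ht])
  map_pt := by
    show Quot.mk _ ((1 : S), f.toFun M.pt) = Quot.mk _ ((1 : S), N.pt)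
    rw [f.map_pt]
  map_act a q := Quot.inductionOn q fun p => by
    show Quot.mk _ (p.1, f.toFun (M.act a p.2)) = Quot.mk _ (p.1, N.act a (f.toFun p.2))
    rw [f.map_act]

end ASetHom

namespace ASet

/-- The generating relation for the tensor product of two `A`-sets:
`(a.m, n) ∼ (m, a.n)`. -/
def tensorRel (M N : ASet A) :
    (M.carrier × N.carrier) → (M.carrier × N.carrier) → Prop :=
  fun p q => ∃ (a : A) (m : M.carrier) (n : N.carrier),
    p = (M.act a m, n) ∧ q = (m, N.act a n)

/-- The tensor product `M ⊗_A N` of two `A`-sets. -/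
def tensor (M N : ASet A) : ASet A where
  carrier := Quot (tensorRel M N)
  pt := Quot.mk _ (M.pt, N.pt)
  act a := Quot.lift (fun p => Quot.mk _ (M.act a p.1, p.2)) (by
    rintro p q ⟨b, m, n, rfl, rfl⟩
    dsimp only
    rw [← M.act_mul, mul_comm a b, M.act_mul]
    exact Quot.sound ⟨b, M.act a m, n, rfl, rfl⟩)
  act_mul a b q := Quot.inductionOn q fun p => by
    show Quot.mk _ (M.act (a * b) p.1, p.2) = Quot.mk _ (M.act a (M.act b p.1), p.2)
    rw [M.act_mul]
  act_pt a := by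
    show Quot.mk _ (M.act a M.pt, N.pt) = Quot.mk _ (M.pt, N.pt)
    rw [M.act_pt]
  zero_act q := Quot.inductionOn q fun p => by
    show Quot.mk _ (M.act 0 p.1, p.2) = Quot.mk _ (M.pt, N.pt)
    rw [M.zero_act]
    exact Quot.sound ⟨0, M.pt, p.2, by rw [M.zero_act], by rw [N.zero_act]⟩
  one_act q := Quot.inductionOn q fun p => by
    show Quot.mk _ (M.act 1 p.1, p.2) = Quot.mk _ p
    rw [M.one_act]

/-- The product of a family of `A`-sets. -/
def pi {ι : Type u} (Ms : ι → ASet A) : ASet A where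
  carrier := ∀ i, (Ms i).carrier
  pt := fun i => (Ms i).pt
  act a m := fun i => (Ms i).act a (m i)
  act_mul a b m := funext fun i => (Ms i).act_mul a b (m i)
  act_pt a := funext fun i => (Ms i).act_pt a
  zero_act m := funext fun i => (Ms i).zero_act (m i)
  one_act m := funext fun i => (Ms i).one_act (m i)

/-- The linearization `M_ℤ` of an `A`-set: the free abelian group on `M ∖ {∗}`. -/
abbrev lin (M : ASet A) : Type u := {m : M.carrier // m ≠ M.pt} →₀ ℤ

end ASet

namespace ASetHom

attribute [local instance] Classical.propDecidable

/-- The linearization `f_ℤ : M_ℤ → N_ℤ` of a morphism of `A`-sets. -/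
noncomputable def lin {M N : ASet A} (f : ASetHom M N) : M.lin →+ N.lin :=
  Finsupp.liftAddHom fun m =>
    if h : f.toFun m.1 = N.pt then 0 else Finsupp.singleAddHom ⟨f.toFun m.1, h⟩

end ASetHom

namespace ASet

/-- The action of `a ∈ A` on `M`, as a morphism of `A`-sets. -/
def actHom (M : ASet A) (a : A) : ASetHom M M :=
  ⟨M.act a, M.act_pt a, fun b m => by
    rw [← M.act_mul, mul_comm a b, M.act_mul]⟩

/-- The linearization of the action of `a ∈ A` on `M_ℤ`. -/
noncomputable def actLin (M : ASet A) (a : A) : M.lin →+ M.lin := (M.actHom a).lin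

/-- An `A`-set is finitely generated if it is a finite union of orbits `A.mᵢ`. -/
def FG (M : ASet A) : Prop :=
  ∃ s : Finset M.carrier, ∀ m : M.carrier, ∃ g ∈ s, ∃ a : A, m = M.act a g

/-- A subset of an `A`-set is an `A`-subset if it contains the basepoint and is stable
under the action. -/
def IsSubASet (M : ASet A) (N : Set M.carrier) : Prop :=
  M.pt ∈ N ∧ ∀ a : A, ∀ m ∈ N, M.act a m ∈ N

/-- An `A`-subset is finitely generated. -/
def SubFG (M : ASet A) (N : Set M.carrier) : Prop :=
  ∃ s : Finset M.carrier, ↑s ⊆ N ∧ ∀ m ∈ N, ∃ g ∈ s, ∃ a : A, m = M.act a g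

/-- An `A`-set is Noetherian if every `A`-subset is finitely generated. -/
def Noetherian (M : ASet A) : Prop :=
  ∀ N : Set M.carrier, M.IsSubASet N → M.SubFG N

/-- `M_ℤ` is a finitely generated `A_ℤ`-module: there are finitely many elements whose
`A`-translates generate `M_ℤ` as an abelian group. -/
def linFG (M : ASet A) : Prop :=
  ∃ s : Finset M.lin,
    AddSubgroup.closure {y : M.lin | ∃ g ∈ s, ∃ a : A, y = M.actLin a g} = ⊤

end ASet

namespace ASetHom

/-- The kernel of a morphism of `A`-sets, as an `A`-set. -/
def kerASet {M N : ASet A} (f : ASetHom M N) : ASet A :=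
  M.sub f.kerSet f.map_pt f.kerSet_stable

/-- The canonical inclusion `(ker f)_ℤ → M_ℤ`. -/
noncomputable def kerLinIncl {M N : ASet A} (f : ASetHom M N) :
    (f.kerASet).lin →+ M.lin :=
  Finsupp.mapDomain.addMonoidHom fun x =>
    (⟨x.1.1, fun h => x.2 (Subtype.ext h)⟩ : {m : M.carrier // m ≠ M.pt})

/-- `f` is a kernel of `g` (via the concrete description of kernels of `A`-sets). -/
def IsKernelOf {M N P : ASet A} (f : ASetHom M N) (g : ASetHom N P) : Prop :=
  Function.Injective f.toFun ∧ Set.range f.toFun = g.kerSet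

/-- `f` is a cokernel of `g` (via the concrete description `N ≅ M/im g`). -/
def IsCokernelOf {M N P : ASet A} (f : ASetHom M N) (g : ASetHom P M) : Prop :=
  Function.Surjective f.toFun ∧
    ∀ m m', f.toFun m = f.toFun m' ↔
      (m = m' ∨ (m ∈ Set.range g.toFun ∧ m' ∈ Set.range g.toFun))

end ASetHom

/-!
A fraction can be moved across the tensor sign, `(a/s) ⊗ m = (1/s) ⊗ a.m`, so every element of
`S⁻¹A ⊗_A M` has the form `(1/s) ⊗ m`, on which the two maps are visibly inverse to each other.
The map `m/s ↦ (1/s) ⊗ m` respects the localization relation because `1/s = t/(ts)` for `t ∈ S`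
brings two fractions to a common denominator; for fixed `m`, the inverse map is the localization
of the orbit map `a ↦ a.m`.
-/

namespace ASet

variable (S : Submonoid A)

theorem tensor_mk_act_left (M N : ASet A) (a : A) (m : M.carrier) (n : N.carrier) :
    (Quot.mk (tensorRel M N) (M.act a m, n) : (tensor M N).carrier) =
      Quot.mk _ (m, N.act a n) :=
  Quot.sound ⟨a, m, n, rfl, rfl⟩

theorem loc_mk_mul_left (M : ASet A) (t s : S) (m : M.carrier) :
    (Quot.mk (locRel S M) (t * s, M.act t m) : (loc S M).carrier) = Quot.mk _ (s, m) :=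
  Quot.sound ⟨1, by
    rw [← M.act_mul]
    simp only [Submonoid.coe_mul, Submonoid.coe_one, one_mul]
    ac_rfl⟩

theorem loc_ofSelf_mk_eq_act (s : S) (a : A) :
    (Quot.mk (locRel S (ofSelf A)) (s, a) : (loc S (ofSelf A)).carrier) =
      (loc S (ofSelf A)).act a (Quot.mk _ (s, (1 : A))) :=
  congrArg (fun b : A => Quot.mk (locRel S (ofSelf A)) (s, b)) (mul_one a).symm

variable (M : ASet A)

theorem tensor_loc_mk_eq_mk_one (s : S) (a : A) (m : M.carrier) :
    (Quot.mk (tensorRel (loc S (ofSelf A)) M) (Quot.mk _ (s, a), m) :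
        (tensor (loc S (ofSelf A)) M).carrier) =
      Quot.mk _ (Quot.mk _ (s, (1 : A)), M.act a m) :=
  (congrArg (fun x => Quot.mk _ (x, m)) (loc_ofSelf_mk_eq_act S s a)).trans
    (tensor_mk_act_left _ M a _ m)

theorem tensor_loc_mk_one_mul_left (t s : S) (m : M.carrier) :
    (Quot.mk (tensorRel (loc S (ofSelf A)) M) (Quot.mk _ (s, (1 : A)), m) :
        (tensor (loc S (ofSelf A)) M).carrier) =
      Quot.mk _ (Quot.mk _ (t * s, (1 : A)), M.act t m) :=
  (congrArg (fun x => Quot.mk _ (x, m)) (loc_mk_mul_left S (ofSelf A) t s (1 : A)).symm).trans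
    (tensor_mk_act_left (loc S (ofSelf A)) M t (Quot.mk _ (t * s, (1 : A))) m)

def locToTensor : ASetHom (loc S M) (tensor (loc S (ofSelf A)) M) where
  toFun := Quot.lift (fun p => Quot.mk _ (Quot.mk _ (p.1, (1 : A)), p.2)) (by
    rintro ⟨s, m⟩ ⟨s', m'⟩ ⟨t, ht⟩
    calc Quot.mk _ (Quot.mk _ (s, (1 : A)), m)
        = Quot.mk _ (Quot.mk _ (t * s' * s, (1 : A)), M.act ↑(t * s') m) :=
          tensor_loc_mk_one_mul_left S M (t * s') s m
      _ = Quot.mk _ (Quot.mk _ (t * s * s', (1 : A)), M.act ↑(t * s) m') := by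
          rw [Submonoid.coe_mul, Submonoid.coe_mul, ht, mul_right_comm]
      _ = Quot.mk _ (Quot.mk _ (s', (1 : A)), m') :=
          (tensor_loc_mk_one_mul_left S M (t * s) s' m').symm)
  map_pt := by
    refine Eq.symm ((tensor_loc_mk_eq_mk_one S M 1 0 M.pt).trans ?_)
    rw [M.zero_act]
    rfl
  map_act a q := Quot.inductionOn q fun p => (tensor_mk_act_left _ _ a _ p.2).symm

def orbitHom (m : M.carrier) : ASetHom (ofSelf A) M :=
  ⟨fun a => M.act a m, M.zero_act m, fun a b => M.act_mul a b m⟩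

def tensorToLoc : ASetHom (tensor (loc S (ofSelf A)) M) (loc S M) where
  toFun := Quot.lift (fun p => (ASetHom.locMap S (M.orbitHom p.2)).toFun p.1) (by
    rintro _ _ ⟨a, x, m, rfl, rfl⟩
    refine Quot.inductionOn x ?_
    rintro ⟨s, (b : A)⟩
    change Quot.mk _ (s, M.act (a * b) m) = Quot.mk _ (s, M.act b (M.act a m))
    rw [mul_comm, M.act_mul])
  map_pt := (ASetHom.locMap S (M.orbitHom M.pt)).map_pt
  map_act a q := by
    refine Quot.inductionOn q ?_
    rintro ⟨x, m⟩
    exact (ASetHom.locMap S (M.orbitHom m)).map_act a x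

theorem tensorToLoc_comp_locToTensor :
    (tensorToLoc S M).comp (locToTensor S M) = ASetHom.id _ := by
  refine ASetHom.ext fun q => Quot.inductionOn q fun ⟨s, m⟩ => ?_
  exact congrArg (fun m => Quot.mk (locRel S M) (s, m)) (M.one_act m)

theorem locToTensor_comp_tensorToLoc :
    (locToTensor S M).comp (tensorToLoc S M) = ASetHom.id _ := by
  refine ASetHom.ext fun q =>
    Quot.inductionOn q fun ⟨x, m⟩ => Quot.inductionOn x fun ⟨s, a⟩ => ?_
  exact (tensor_loc_mk_eq_mk_one S M s a m).symm

end ASet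

/-- For a multiplicative subset `S ⊆ A` and an `A`-set `M` there is an isomorphism of
`A`-sets `S⁻¹M ≅ S⁻¹A ⊗_A M` given by `m/s ↦ (1/s) ⊗ m` with inverse
`(a/s) ⊗ m ↦ (a.m)/s`. -/
theorem loc_iso_tensor {A : Type u} [CommMonoidWithZero A] (S : Submonoid A)
    (M : ASet A) :
    ∃ (φ : ASetHom (ASet.loc S M) (ASet.tensor (ASet.loc S (ASet.ofSelf A)) M))
      (ψ : ASetHom (ASet.tensor (ASet.loc S (ASet.ofSelf A)) M) (ASet.loc S M)),
      (∀ (s : S) (m : M.carrier),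
        φ.toFun (Quot.mk _ (s, m)) = Quot.mk _ (Quot.mk _ (s, (1 : A)), m)) ∧
      (∀ (s : S) (a : A) (m : M.carrier),
        ψ.toFun (Quot.mk _ (Quot.mk _ (s, a), m)) = Quot.mk _ (s, M.act a m)) ∧
      ψ.comp φ = ASetHom.id _ ∧ φ.comp ψ = ASetHom.id _ :=
  ⟨ASet.locToTensor S M, ASet.tensorToLoc S M, fun _ _ => rfl, fun _ _ _ => rfl,
    ASet.tensorToLoc_comp_locToTensor S M, ASet.locToTensor_comp_tensorToLoc S M⟩
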